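/- For all constants α and β, the following are equivalent: (i) for every T-mapping μ satisfying Δ, μ(α) ∩ μ(β) ≠ ∅; (ii) μ*(α) ∩ μ*(β) ≠ ∅, where μ* is the limit of the saturation sequence for Δ. -/

import Mathlib

open Set

namespace IncPaper

variable {Attr Const : Type}

/-- A tuple over the universe `Attr` with constants `Const`: a partial assignment. -/
abbrev Tup (Attr Const : Type) := Attr → Option Const

/-- Well-formedness: each attribute is assigned a constant of its own domain. -/
def WF (dom : Const → Attr) (t : Tup Attr Const) : Prop :=
  ∀ a c, t a = some c → dom c = a

/-- The schema of a tuple: the attributes on which it is defined. -/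
def sch (t : Tup Attr Const) : Set Attr := {a | t a ≠ none}

/-- Sub-tuple relation `t₁ ⊑ t₂`. -/
def Sub (t₁ t₂ : Tup Attr Const) : Prop := ∀ a c, t₁ a = some c → t₂ a = some c

/-- A T-mapping assigns a set of naturals to each constant. -/
abbrev TMap (Const : Type) := Const → Set ℕ

/-- Extension of a T-mapping to tuples: intersection over occurring constants. -/
def tmap (μ : TMap Const) (t : Tup Attr Const) : Set ℕ :=
  {n | ∀ a c, t a = some c → n ∈ μ c}

/-- A functional dependency `X → A`. -/
structure FDep (Attr : Type) where
  X : Set Attr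
  A : Attr

/-- Standing assumptions on sets of functional dependencies `X → A`:
`X` nonempty and `A ∉ X`. -/
def GoodFD (FD : Set (FDep Attr)) : Prop := ∀ fd ∈ FD, fd.X.Nonempty ∧ fd.A ∉ fd.X

/-- A T-mapping satisfies the dependency `X → Y`. -/
def SatFD (dom : Const → Attr) (μ : TMap Const) (X Y : Set Attr) : Prop :=
  ∀ x y : Tup Attr Const, WF dom x → WF dom y → sch x = X → sch y = Y →
    (tmap μ x ∩ tmap μ y).Nonempty → tmap μ x ⊆ tmap μ y

/-- A T-mapping satisfies a dependency `X → A` (single-attribute form). -/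
def SatFDA (dom : Const → Attr) (μ : TMap Const) (fd : FDep Attr) : Prop :=
  ∀ x : Tup Attr Const, WF dom x → sch x = fd.X →
    ∀ a : Const, dom a = fd.A → (tmap μ x ∩ μ a).Nonempty → tmap μ x ⊆ μ a

/-- `μ ⊨ Δ` where `Δ = (D, FD)`. -/
def SatDB (dom : Const → Attr) (μ : TMap Const)
    (D : Set (Tup Attr Const)) (FD : Set (FDep Attr)) : Prop :=
  (∀ t ∈ D, (tmap μ t).Nonempty) ∧ ∀ fd ∈ FD, SatFDA dom μ fd

/-- `Δ ⊢ t`: every T-mapping satisfying `Δ` assigns `t` a nonempty set. -/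
def Derives (dom : Const → Attr) (D : Set (Tup Attr Const)) (FD : Set (FDep Attr))
    (t : Tup Attr Const) : Prop :=
  ∀ μ : TMap Const, SatDB dom μ D FD → (tmap μ t).Nonempty

/-- `Δ |∼ t`: `t` is potentially false. -/
def PotFalse (dom : Const → Attr) (D : Set (Tup Attr Const)) (FD : Set (FDep Attr))
    (t : Tup Attr Const) : Prop :=
  ∃ a a' : Const, a ≠ a' ∧ dom a = dom a' ∧
    ∀ μ : TMap Const, SatDB dom μ D FD → tmap μ t ⊆ μ a ∩ μ a'

/-- The closure `t⁺` of a tuple. -/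
def closure (dom : Const → Attr) (D : Set (Tup Attr Const)) (FD : Set (FDep Attr))
    (t : Tup Attr Const) : Set Const :=
  {a | ∀ μ : TMap Const, SatDB dom μ D FD → tmap μ t ⊆ μ a}

/-- The initial T-mapping `μ₀`: identifiers of tuples of `D` containing the constant. -/
def initMap (ident : Tup Attr Const → ℕ) (D : Set (Tup Attr Const)) : TMap Const :=
  fun c => {n | ∃ t ∈ D, ident t = n ∧ ∃ a, t a = some c}

/-- One step of the saturation sequence enforcing a violated dependency. -/
def SatStep (dom : Const → Attr) (FD : Set (FDep Attr)) (μ μ' : TMap Const) : Prop :=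
  ∃ fd ∈ FD, ∃ x : Tup Attr Const, WF dom x ∧ sch x = fd.X ∧
    ∃ a : Const, dom a = fd.A ∧ (tmap μ x ∩ μ a).Nonempty ∧ ¬ tmap μ x ⊆ μ a ∧
      μ' a = μ a ∪ tmap μ x ∧ ∀ c, c ≠ a → μ' c = μ c

/-- An interpretation: a T-mapping satisfying the partition constraint. -/
def Interp (dom : Const → Attr) (μ : TMap Const) : Prop :=
  ∀ a a' : Const, a ≠ a' → dom a = dom a' → μ a ∩ μ a' = ∅

open Classical in
/-- The tuple `xa`: extend `x` with the constant `a` (on attribute `dom a`). -/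
noncomputable def extend (dom : Const → Attr) (x : Tup Attr Const) (a : Const) :
    Tup Attr Const :=
  fun b => if b = dom a then some a else x b

/-- The computed closure `cl(t)` of the closure algorithm (Algorithm 1). -/
inductive InCl (dom : Const → Attr) (D : Set (Tup Attr Const)) (FD : Set (FDep Attr))
    (t : Tup Attr Const) : Const → Prop
  | base (a : Const) (b : Attr) : t b = some a → InCl dom D FD t a
  | step (fd : FDep Attr) (x : Tup Attr Const) (a : Const) :
      fd ∈ FD → WF dom x → sch x = fd.X → dom a = fd.A →
      (∀ c : Const, (∃ b, x b = some c) → InCl dom D FD t c) →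
      Derives dom (insert t D) FD (extend dom x a) →
      InCl dom D FD t a

/-- Two tuples agree (and are defined) on a set of attributes. -/
def agreeOn (t₁ t₂ : Tup Attr Const) (X : Set Attr) : Prop :=
  ∀ b ∈ X, t₁ b = t₂ b ∧ t₁ b ≠ none

open Classical in
/-- The tuple obtained from `t₂` by taking `t₁`'s `A`-value. -/
noncomputable def chaseJoin (fd : FDep Attr) (t₁ t₂ : Tup Attr Const) : Tup Attr Const :=
  fun b => if b = fd.A then t₁ b else t₂ b

/-- One step of the chase procedure (Algorithm 2): add a new joined tuple. -/
def ChaseStep (FD : Set (FDep Attr)) (S S' : Set (Tup Attr Const)) : Prop :=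
  ∃ fd ∈ FD, ∃ t₁ ∈ S, ∃ t₂ ∈ S,
    fd.X ⊆ sch t₁ ∧ fd.A ∈ sch t₁ ∧ fd.X ⊆ sch t₂ ∧ agreeOn t₁ t₂ fd.X ∧
    chaseJoin fd t₁ t₂ ∉ S ∧ S' = insert (chaseJoin fd t₁ t₂) S

/-- Closure of a relation scheme `Q` with respect to `FD`. -/
inductive InSchCl (FD : Set (FDep Attr)) (Q : Set Attr) : Attr → Prop
  | base (A : Attr) : A ∈ Q → InSchCl FD Q A
  | step (fd : FDep Attr) : fd ∈ FD → (∀ B ∈ fd.X, InSchCl FD Q B) → InSchCl FD Q fd.A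

/-- Relational satisfaction of a functional dependency by a set of tuples. -/
def RelSatFD (R : Set (Tup Attr Const)) (fd : FDep Attr) : Prop :=
  ∀ t ∈ R, ∀ t' ∈ R, fd.X ⊆ sch t → fd.A ∈ sch t → fd.X ⊆ sch t' → fd.A ∈ sch t' →
    agreeOn t t' fd.X → t fd.A = t' fd.A

/-- A repair of `Δ`: a maximal subset of the chased table `D*` satisfying `FD`. -/
def IsRepair (FD : Set (FDep Attr)) (Dstar R : Set (Tup Attr Const)) : Prop :=
  R ⊆ Dstar ∧ (∀ fd ∈ FD, RelSatFD R fd) ∧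
    ∀ R', R ⊆ R' → R' ⊆ Dstar → (∀ fd ∈ FD, RelSatFD R' fd) → R' = R

open Classical in
/-- Restriction of a tuple to a schema `X`. -/
noncomputable def restrict (t : Tup Attr Const) (X : Set Attr) : Tup Attr Const :=
  fun b => if b ∈ X then t b else none

/-- Projection `π_X(D)` of a set of tuples. -/
def projD (Dst : Set (Tup Attr Const)) (X : Set Attr) : Set (Tup Attr Const) :=
  {q | ∃ t ∈ Dst, X ⊆ sch t ∧ q = restrict t X}

/-- Projection `π_X(FD)` of a set of functional dependencies. -/
def projFD (FD : Set (FDep Attr)) (X : Set Attr) : Set (FDep Attr) :=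
  {fd ∈ FD | fd.X ⊆ X ∧ fd.A ∈ X}

/-- Selection `σ_Γ(D)`. -/
def sel (Γ : Tup Attr Const → Prop) (Dst : Set (Tup Attr Const)) :
    Set (Tup Attr Const) :=
  {t ∈ Dst | Γ t}

/-- `inc(X → A)`: the `X`-values with conflicting `A`-values in `D*`. -/
def IncSet (Dstar : Set (Tup Attr Const)) (fd : FDep Attr) : Set (Tup Attr Const) :=
  {x | sch x = fd.X ∧ ∃ q ∈ Dstar, ∃ q' ∈ Dstar, Sub x q ∧ Sub x q' ∧
    ∃ a a' : Const, q fd.A = some a ∧ q' fd.A = some a' ∧ a ≠ a'}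

/-- The output of the repair-generation procedure for a choice function. -/
def genRepair (FD : Set (FDep Attr)) (Dstar : Set (Tup Attr Const))
    (choice : FDep Attr → Tup Attr Const → Const) : Set (Tup Attr Const) :=
  {q | q ∈ Dstar ∧ ∀ fd ∈ FD, ∀ x ∈ IncSet Dstar fd,
    Sub x q → fd.A ∈ sch q → q fd.A = some (choice fd x)}

/-- Belnap's four truth values. -/
inductive Four where
  | t
  | b
  | n
  | f
  deriving DecidableEq

namespace Four

/-- Knowledge ordering `≼ₖ`. -/
def kle (x y : Four) : Prop := x = y ∨ x = n ∨ y = b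

/-- Truth ordering `≼ₜ`. -/
def tle (x y : Four) : Prop := x = y ∨ x = f ∨ y = t

/-- Knowledge join `⊕`. -/
def oplus (x y : Four) : Four :=
  if x = n then y else if y = n then x else if x = y then x else b

/-- Knowledge meet `⊗`. -/
def otimes (x y : Four) : Four :=
  if x = b then y else if y = b then x else if x = y then x else n

/-- Truth join `∨`. -/
def lor (x y : Four) : Four :=
  if x = f then y else if y = f then x else if x = y then x else t

/-- Truth meet `∧`. -/
def land (x y : Four) : Four :=
  if x = t then y else if y = t then x else if x = y then x else f

end Four

/-- The four truth values of tuples. -/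
inductive TV where
  | vtrue
  | vfalse
  | vinc
  | vunkn
  deriving DecidableEq

namespace TV

/-- Knowledge ordering `◁` on truth values: `unkn ◁ true ◁ inc`, `unkn ◁ false ◁ inc`. -/
def kle (x y : TV) : Prop := x = y ∨ x = vunkn ∨ y = vinc

/-- Knowledge join `⊕` on truth values. -/
def kjoin (x y : TV) : TV :=
  if x = vunkn then y else if y = vunkn then x else if x = y then x else vinc

end TV

open Classical in
/-- The truth value `v_Δ(t)` of a tuple in `Δ = (D, FD)`. -/
noncomputable def tval (dom : Const → Attr) (D : Set (Tup Attr Const))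
    (FD : Set (FDep Attr)) (t : Tup Attr Const) : TV :=
  if Derives dom D FD t then (if PotFalse dom D FD t then .vinc else .vtrue)
  else (if PotFalse dom D FD t then .vfalse else .vunkn)

/-! The limit `μ*` satisfies `Δ`: it contains `μ₀`, which makes every tuple of `D` nonempty,
and no saturation step applies to it, so every dependency holds. This gives (i) ⇒ (ii).
Conversely, a T-mapping `μ ⊨ Δ` receives a map `f : ℕ → ℕ` sending `id(t)` to a point of `μ(t)`,
so `f` maps `μ₀(c)` into `μ(c)` for every constant `c`. A saturation step adds `μ(x)` to `μ(a)`
only when the two overlap; their images then overlap in `μ`, which satisfies `X → A`, so the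
added points are still mapped into `μ(a)`. Hence `f` maps `μ*(c)` into `μ(c)`, and a common
point of `μ*(α)` and `μ*(β)` goes to a common point of `μ(α)` and `μ(β)`. -/

def IsSaturationSeq (dom : Const → Attr) (FD : Set (FDep Attr)) (μs : ℕ → TMap Const) : Prop :=
  ∀ i, SatStep dom FD (μs i) (μs (i + 1)) ∨
    (μs (i + 1) = μs i ∧ ∀ ν : TMap Const, ¬ SatStep dom FD (μs i) ν)

section SatStep

variable {dom : Const → Attr} {FD : Set (FDep Attr)} {μ μ' ν : TMap Const}

theorem mapsTo_tmap {f : ℕ → ℕ} (hf : ∀ c, MapsTo f (μ c) (ν c)) (x : Tup Attr Const) :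
    MapsTo f (tmap μ x) (tmap ν x) :=
  fun _ hm b c hbc => hf c (hm b c hbc)

theorem tmap_mono (h : μ ≤ ν) (x : Tup Attr Const) : tmap μ x ⊆ tmap ν x :=
  fun _ hm b c hbc => h c (hm b c hbc)

theorem SatStep.le (h : SatStep dom FD μ μ') : μ ≤ μ' := by
  obtain ⟨-, -, x, -, -, a, -, -, -, hμ'a, hμ'c⟩ := h
  intro c
  by_cases hc : c = a
  · subst hc
    exact hμ'a ▸ subset_union_left
  · exact (hμ'c c hc).ge

theorem SatStep.ne (h : SatStep dom FD μ μ') : μ' ≠ μ := by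
  obtain ⟨-, -, x, -, -, a, -, -, hnsub, hμ'a, -⟩ := h
  rintro rfl
  exact hnsub (union_eq_left.mp hμ'a.symm)

theorem satFDA_of_forall_not_satStep (h : ∀ ν, ¬ SatStep dom FD μ ν) :
    ∀ fd ∈ FD, SatFDA dom μ fd := by
  classical
  intro fd hfd x hwx hsx a hda hne
  by_contra hnsub
  exact h (Function.update μ a (μ a ∪ tmap μ x))
    ⟨fd, hfd, x, hwx, hsx, a, hda, hne, hnsub, Function.update_self ..,
      fun c hc => Function.update_of_ne hc ..⟩

theorem SatStep.mapsTo (h : SatStep dom FD μ μ') (hν : ∀ fd ∈ FD, SatFDA dom ν fd)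
    {f : ℕ → ℕ} (hf : ∀ c, MapsTo f (μ c) (ν c)) : ∀ c, MapsTo f (μ' c) (ν c) := by
  obtain ⟨fd, hfd, x, hwx, hsx, a, hda, ⟨p, hpx, hpa⟩, -, hμ'a, hμ'c⟩ := h
  intro c
  by_cases hc : c = a
  · subst hc
    have hsub : tmap ν x ⊆ ν c :=
      hν fd hfd x hwx hsx c hda ⟨f p, mapsTo_tmap hf x hpx, hf c hpa⟩
    rw [hμ'a]
    exact (hf c).union ((mapsTo_tmap hf x).mono_right hsub)
  · rw [hμ'c c hc]
    exact hf c

end SatStep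

section InitMap

variable {ident : Tup Attr Const → ℕ} {D : Set (Tup Attr Const)}

theorem ident_mem_tmap_initMap {t : Tup Attr Const} (ht : t ∈ D) :
    ident t ∈ tmap (initMap ident D) t :=
  fun a _ hac => ⟨t, ht, rfl, a, hac⟩

theorem exists_mapsTo_initMap (hid : InjOn ident D) {μ : TMap Const}
    (hμ : ∀ t ∈ D, (tmap μ t).Nonempty) : ∃ f : ℕ → ℕ, ∀ c, MapsTo f (initMap ident D c) (μ c) := by
  have hwit : ∀ t, ∃ n, t ∈ D → n ∈ tmap μ t := fun t => by
    by_cases ht : t ∈ D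
    · exact (hμ t ht).imp fun _ hn _ => hn
    · exact ⟨0, fun h => absurd h ht⟩
  choose g hg using hwit
  refine ⟨g ∘ Function.invFunOn ident D, fun c m ⟨t, ht, htm, a, hac⟩ => ?_⟩
  subst htm
  have hinv : Function.invFunOn ident D (ident t) = t := hid.leftInvOn_invFunOn ht
  simp only [Function.comp_apply, hinv]
  exact hg t ht a c hac

end InitMap

namespace IsSaturationSeq

variable {dom : Const → Attr} {FD : Set (FDep Attr)} {μs : ℕ → TMap Const}

theorem monotone (hμs : IsSaturationSeq dom FD μs) : Monotone μs :=
  monotone_nat_of_le_succ fun i => (hμs i).elim SatStep.le fun h => h.1.ge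

theorem forall_not_satStep (hμs : IsSaturationSeq dom FD μs) {N : ℕ}
    (hN : μs (N + 1) = μs N) : ∀ ν, ¬ SatStep dom FD (μs N) ν :=
  (hμs N).elim (fun h => absurd hN h.ne) And.right

theorem mapsTo {ν : TMap Const} (hμs : IsSaturationSeq dom FD μs)
    (hν : ∀ fd ∈ FD, SatFDA dom ν fd) {f : ℕ → ℕ} (h0 : ∀ c, MapsTo f (μs 0 c) (ν c)) :
    ∀ i c, MapsTo f (μs i c) (ν c) := by
  intro i
  induction i with
  | zero => exact h0
  | succ i ih => exact (hμs i).elim (fun h => h.mapsTo hν ih) fun h => h.1 ▸ ih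

theorem satDB (hμs : IsSaturationSeq dom FD μs) {ident : Tup Attr Const → ℕ}
    {D : Set (Tup Attr Const)} (h0 : μs 0 = initMap ident D) {N : ℕ}
    (hN : μs (N + 1) = μs N) : SatDB dom (μs N) D FD := by
  refine ⟨fun t ht => ⟨ident t, ?_⟩, satFDA_of_forall_not_satStep (hμs.forall_not_satStep hN)⟩
  exact tmap_mono (hμs.monotone N.zero_le) t (h0 ▸ ident_mem_tmap_initMap ht)

end IsSaturationSeq

theorem derivable_overlap_iff_limit_overlap_general (dom : Const → Attr)
    (D : Set (Tup Attr Const))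
    (ident : Tup Attr Const → ℕ)
    (hid : ∀ t₁ ∈ D, ∀ t₂ ∈ D, ident t₁ = ident t₂ → t₁ = t₂)
    (FD : Set (FDep Attr))
    (μs : ℕ → TMap Const) (h0 : μs 0 = initMap ident D)
    (hfair : ∀ i, SatStep dom FD (μs i) (μs (i + 1)) ∨
      (μs (i + 1) = μs i ∧ ∀ ν : TMap Const, ¬ SatStep dom FD (μs i) ν))
    (N : ℕ) (hN : ∀ i, N ≤ i → μs i = μs N) :
    ∀ α β : Const,
      (∀ μ : TMap Const, SatDB dom μ D FD → (μ α ∩ μ β).Nonempty) ↔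
        (μs N α ∩ μs N β).Nonempty := by
  have hμs : IsSaturationSeq dom FD μs := hfair
  have hsat : SatDB dom (μs N) D FD := hμs.satDB h0 (hN (N + 1) N.le_succ)
  intro α β
  refine ⟨fun h => h (μs N) hsat, fun ⟨n, hnα, hnβ⟩ μ hμ => ?_⟩
  obtain ⟨f, hf⟩ := exists_mapsTo_initMap hid hμ.1
  have hfN := hμs.mapsTo hμ.2 (h0 ▸ hf) N
  exact ⟨f n, hfN α hnα, hfN β hnβ⟩

/-- for all constants `α`, `β`: `Δ ⊢ (α ⊓ β)` (every T-mapping satisfying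
`Δ` gives `μ(α) ∩ μ(β) ≠ ∅`) iff `μ*(α) ∩ μ*(β) ≠ ∅` for the limit `μ*`. -/
theorem derivable_overlap_iff_limit_overlap [Fintype Attr] (dom : Const → Attr)
    (D : Set (Tup Attr Const)) (hDfin : D.Finite) (hDwf : ∀ t ∈ D, WF dom t)
    (ident : Tup Attr Const → ℕ)
    (hid : ∀ t₁ ∈ D, ∀ t₂ ∈ D, ident t₁ = ident t₂ → t₁ = t₂)
    (FD : Set (FDep Attr)) (hFD : GoodFD FD)
    (μs : ℕ → TMap Const) (h0 : μs 0 = initMap ident D)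
    (hfair : ∀ i, SatStep dom FD (μs i) (μs (i + 1)) ∨
      (μs (i + 1) = μs i ∧ ∀ ν : TMap Const, ¬ SatStep dom FD (μs i) ν))
    (N : ℕ) (hN : ∀ i, N ≤ i → μs i = μs N) :
    ∀ α β : Const,
      (∀ μ : TMap Const, SatDB dom μ D FD → (μ α ∩ μ β).Nonempty) ↔
        (μs N α ∩ μs N β).Nonempty :=
  derivable_overlap_iff_limit_overlap_general dom D ident hid FD μs h0 hfair N hN

end IncPaper
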